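/- arXiv:2604.05644 — 4 statements merged into one kernel-verified Lean document; each statement's English description precedes it below -/
import Mathlib

section
/- For the forward Euler–Maruyama oscillator recursion with λ ≥ 1 and step size 0 < τ < 1, the expected energy satisfies E_n ≥ exp(τ² n / 2) · E_0 for all n ≥ 0. -/
/-!
Pointwise, the deterministic part of a forward Euler step multiplies the energy density
`v² + λu²` by `1 + λτ²`. The noise increment is centred and independent of the state, so it
contributes no cross term and only adds its second moment to the expected energy. Hence
`E (n + 1) ≥ (1 + τ²) E n`, and `1 + τ² ≥ exp (τ² / 2)` because `τ² ≤ 1`.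
-/

open MeasureTheory ProbabilityTheory

lemma Real.exp_half_le_one_add {x : ℝ} (hx0 : 0 ≤ x) (hx1 : x ≤ 1) :
    Real.exp (x / 2) ≤ 1 + x := by
  have hpos : 0 < 1 - x / 2 := by linarith
  calc Real.exp (x / 2) ≤ 1 / (1 - x / 2) :=
        Real.exp_bound_div_one_sub_of_interval (by linarith) (by linarith)
    _ ≤ 1 + x := by rw [div_le_iff₀ hpos]; nlinarith

lemma pow_mul_le_of_mul_le_succ {R : Type*} [Semiring R] [PartialOrder R] [IsOrderedRing R]
    {a : R} (ha : 0 ≤ a) {E : ℕ → R} (h : ∀ n, a * E n ≤ E (n + 1)) (n : ℕ) :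
    a ^ n * E 0 ≤ E n := by
  induction n with
  | zero => simp
  | succ n ih =>
    calc a ^ (n + 1) * E 0 = a * (a ^ n * E 0) := by rw [pow_succ', mul_assoc]
      _ ≤ a * E n := mul_le_mul_of_nonneg_left ih ha
      _ ≤ E (n + 1) := h n

lemma forwardEuler_energy_eq (lam τ u v : ℝ) :
    (v - τ * lam * u) ^ 2 + lam * (u + τ * v) ^ 2 = (1 + lam * τ ^ 2) * (v ^ 2 + lam * u ^ 2) := by
  ring

section Integrals

variable {Ω : Type*} [MeasurableSpace Ω] {μ : Measure Ω}

lemma integral_sq_add_const_mul_sq {f g : Ω → ℝ} (hf : MemLp f 2 μ) (hg : MemLp g 2 μ) (c : ℝ) :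
    ∫ ω, f ω ^ 2 + c * g ω ^ 2 ∂μ = ∫ ω, f ω ^ 2 ∂μ + c * ∫ ω, g ω ^ 2 ∂μ := by
  rw [integral_add hf.integrable_sq (hg.integrable_sq.const_mul c), integral_const_mul]

lemma integral_add_sq_of_indepFun {X Y : Ω → ℝ} (hX : MemLp X 2 μ) (hY : MemLp Y 2 μ)
    (hXY : IndepFun X Y μ) (hY0 : ∫ ω, Y ω ∂μ = 0) :
    ∫ ω, (X ω + Y ω) ^ 2 ∂μ = ∫ ω, X ω ^ 2 ∂μ + ∫ ω, Y ω ^ 2 ∂μ := by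
  have hcross : ∫ ω, X ω * Y ω ∂μ = 0 := by
    rw [hXY.integral_fun_mul_eq_mul_integral hX.aestronglyMeasurable hY.aestronglyMeasurable,
      hY0, mul_zero]
  have hmul : Integrable (fun ω => 2 * (X ω * Y ω)) μ := (hX.integrable_mul hY).const_mul 2
  calc ∫ ω, (X ω + Y ω) ^ 2 ∂μ = ∫ ω, (X ω ^ 2 + 2 * (X ω * Y ω)) + Y ω ^ 2 ∂μ := by
        congr with ω; ring
    _ = ∫ ω, X ω ^ 2 ∂μ + ∫ ω, Y ω ^ 2 ∂μ := by
        have hXmul : Integrable (fun ω => X ω ^ 2 + 2 * (X ω * Y ω)) μ :=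
          hX.integrable_sq.add hmul
        rw [integral_add hXmul hY.integrable_sq,
          integral_add hX.integrable_sq hmul, integral_const_mul, hcross, mul_zero, add_zero]

lemma integral_forwardEuler_energy {lam τ : ℝ} {u v L : Ω → ℝ} (hu : MemLp u 2 μ)
    (hv : MemLp v 2 μ) (hL : MemLp L 2 μ) (hindep : IndepFun (fun ω => (u ω, v ω)) L μ)
    (hL0 : ∫ ω, L ω ∂μ = 0) :
    ∫ ω, (v ω - τ * lam * u ω + L ω) ^ 2 + lam * (u ω + τ * v ω) ^ 2 ∂μ
      = (1 + lam * τ ^ 2) * ∫ ω, v ω ^ 2 + lam * u ω ^ 2 ∂μ + ∫ ω, L ω ^ 2 ∂μ := by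
  have hW : MemLp (fun ω => v ω - τ * lam * u ω) 2 μ := hv.sub (hu.const_mul _)
  have hu' : MemLp (fun ω => u ω + τ * v ω) 2 μ := hu.add (hv.const_mul _)
  have hWL : IndepFun (fun ω => v ω - τ * lam * u ω) L μ :=
    hindep.comp (by fun_prop : Measurable fun p : ℝ × ℝ => p.2 - τ * lam * p.1) measurable_id
  have hv' : MemLp (fun ω => v ω - τ * lam * u ω + L ω) 2 μ := hW.add hL
  rw [integral_sq_add_const_mul_sq hv' hu', integral_add_sq_of_indepFun hW hL hWL hL0,
    add_right_comm, ← integral_sq_add_const_mul_sq hW hu']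
  simp_rw [forwardEuler_energy_eq, integral_const_mul]

end Integrals

theorem forward_EM_energy_exponential_growth_general
    {Ω : Type*} [MeasureSpace Ω]
    (lam τ : ℝ) (hlam : 1 ≤ lam) (hτ0 : 0 < τ) (hτ1 : τ < 1)
    (u v ΔL : ℕ → Ω → ℝ)
    (hu : ∀ n, MemLp (u n) 2 ℙ) (hv : ∀ n, MemLp (v n) 2 ℙ)
    (hL : ∀ n, MemLp (ΔL n) 2 ℙ)
    (hLmean : ∀ n, ∫ ω, ΔL n ω = 0)
    (hindep : ∀ n, IndepFun (fun ω => (u n ω, v n ω)) (ΔL n) ℙ)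
    (hrecu : ∀ n ω, u (n + 1) ω = u n ω + τ * v n ω)
    (hrecv : ∀ n ω, v (n + 1) ω = v n ω - τ * lam * u n ω + ΔL n ω)
    (E : ℕ → ℝ)
    (hE : ∀ n, E n = (1 / 2) * ∫ ω, ((v n ω) ^ 2 + lam * (u n ω) ^ 2)) :
    ∀ n, E n ≥ Real.exp (τ ^ 2 * n / 2) * E 0 := by
  have hE_nonneg : ∀ n, 0 ≤ E n := fun n => by
    rw [hE n]
    exact mul_nonneg (by norm_num) (integral_nonneg fun ω => by positivity)
  have hstep : ∀ n, (1 + τ ^ 2) * E n ≤ E (n + 1) := fun n => by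
    have hnoise : 0 ≤ ∫ ω, ΔL n ω ^ 2 := integral_nonneg fun ω => sq_nonneg _
    have hrec : E (n + 1) = (1 + lam * τ ^ 2) * E n + 1 / 2 * ∫ ω, ΔL n ω ^ 2 := by
      rw [hE, hE]
      simp_rw [hrecu, hrecv]
      rw [integral_forwardEuler_energy (hu n) (hv n) (hL n) (hindep n) (hLmean n)]
      ring
    nlinarith [mul_nonneg (mul_nonneg (sub_nonneg.2 hlam) (sq_nonneg τ)) (hE_nonneg n)]
  intro n
  calc Real.exp (τ ^ 2 * n / 2) * E 0 = Real.exp (τ ^ 2 / 2) ^ n * E 0 := by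
        rw [← Real.exp_nat_mul]; ring_nf
    _ ≤ (1 + τ ^ 2) ^ n * E 0 := by
        have := hE_nonneg 0
        gcongr
        exact Real.exp_half_le_one_add (sq_nonneg τ) (by nlinarith)
    _ ≤ E n := pow_mul_le_of_mul_le_succ (by positivity) hstep n

theorem forward_EM_energy_exponential_growth
    {Ω : Type*} [MeasureSpace Ω] [IsProbabilityMeasure (ℙ : Measure Ω)]
    (lam τ : ℝ) (hlam : 1 ≤ lam) (hτ0 : 0 < τ) (hτ1 : τ < 1)
    (u v ΔL : ℕ → Ω → ℝ)
    (hu : ∀ n, MemLp (u n) 2 ℙ) (hv : ∀ n, MemLp (v n) 2 ℙ)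
    (hL : ∀ n, MemLp (ΔL n) 2 ℙ)
    (hLmean : ∀ n, ∫ ω, ΔL n ω = 0)
    (hindep : ∀ n, IndepFun (fun ω => (u n ω, v n ω)) (ΔL n) ℙ)
    (hrecu : ∀ n ω, u (n + 1) ω = u n ω + τ * v n ω)
    (hrecv : ∀ n ω, v (n + 1) ω = v n ω - τ * lam * u n ω + ΔL n ω)
    (E : ℕ → ℝ)
    (hE : ∀ n, E n = (1 / 2) * ∫ ω, ((v n ω) ^ 2 + lam * (u n ω) ^ 2)) :
    ∀ n, E n ≥ Real.exp (τ ^ 2 * n / 2) * E 0 :=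
  forward_EM_energy_exponential_growth_general lam τ hlam hτ0 hτ1 u v ΔL hu hv hL hLmean hindep
    hrecu hrecv E hE
end

section
/- For the backward Euler–Maruyama recursion for a stochastic oscillator mode, i.e. (1+τ²λ) v_{n+1} = v_n - τ λ u_n + ΔL_n and u_{n+1} = u_n + τ v_{n+1}, with λ > 0, τ > 0, ΔL_n mean zero with variance τ v_{ℓ} and independent of (u_n, v_n), the expected energy E_n = (1/2)E[v_n² + λ u_n²] satisfies the exact recursion E_{n+1} = (1 + τ² λ)^{-1} (E_n + (1/2) v_{ℓ} τ). -/
/-!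
Writing `a = 1 + τ²λ`, the two update equations give the exact algebraic identity
`a (v_{n+1}² + λ u_{n+1}²) = (v_n + ΔL_n)² + λ u_n²`, with no remainder term. Taking
expectations, the cross term `E[v_n ΔL_n]` vanishes by independence and the zero mean of the
increment, and `E[ΔL_n²] = τ v_ℓ`.
-/

open MeasureTheory ProbabilityTheory

theorem backwardEuler_energy_identity {R : Type*} [CommRing R] {lam τ u v w u' L : R}
    (hw : (1 + τ ^ 2 * lam) * w = v - τ * lam * u + L) (hu' : u' = u + τ * w) :
    (1 + τ ^ 2 * lam) * (w ^ 2 + lam * u' ^ 2) = (v + L) ^ 2 + lam * u ^ 2 := by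
  subst hu'
  linear_combination ((1 + τ ^ 2 * lam) * w + (v - τ * lam * u + L) + 2 * lam * τ * u) * hw

theorem ProbabilityTheory.IndepFun.integral_add_sq {Ω : Type*} [MeasurableSpace Ω]
    {μ : Measure Ω} [IsFiniteMeasure μ] {X Y : Ω → ℝ} (hXY : IndepFun X Y μ)
    (hX : MemLp X 2 μ) (hY : MemLp Y 2 μ) (hY₀ : ∫ ω, Y ω ∂μ = 0) :
    ∫ ω, (X ω + Y ω) ^ 2 ∂μ = ∫ ω, X ω ^ 2 ∂μ + ∫ ω, Y ω ^ 2 ∂μ := by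
  have hcross : ∫ ω, X ω * Y ω ∂μ = 0 := by
    rw [hXY.integral_fun_mul_eq_mul_integral hX.aestronglyMeasurable hY.aestronglyMeasurable,
      hY₀, mul_zero]
  have hXYi : Integrable (fun ω => 2 * (X ω * Y ω)) μ :=
    (hXY.integrable_mul (hX.integrable one_le_two) (hY.integrable one_le_two)).const_mul 2
  have hX2XYi : Integrable (fun ω => X ω ^ 2 + 2 * (X ω * Y ω)) μ := hX.integrable_sq.add hXYi
  simp_rw [add_sq, mul_assoc]
  rw [integral_add hX2XYi hY.integrable_sq, integral_add hX.integrable_sq hXYi,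
    integral_const_mul, hcross]
  ring

theorem backward_EM_energy_recursion_general
    {Ω : Type*} [MeasureSpace Ω] [IsProbabilityMeasure (ℙ : Measure Ω)]
    (lam τ vl : ℝ) (hlam : 0 < lam)
    (u v ΔL : ℕ → Ω → ℝ)
    (hu : ∀ n, MemLp (u n) 2 ℙ) (hv : ∀ n, MemLp (v n) 2 ℙ)
    (hL : ∀ n, MemLp (ΔL n) 2 ℙ)
    (hLmean : ∀ n, ∫ ω, ΔL n ω = 0)
    (hLvar : ∀ n, ∫ ω, (ΔL n ω) ^ 2 = τ * vl)
    (hindep : ∀ n, IndepFun (fun ω => (u n ω, v n ω)) (ΔL n) ℙ)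
    (hrecu : ∀ n ω, u (n + 1) ω = u n ω + τ * v (n + 1) ω)
    (hrecv : ∀ n ω, (1 + τ ^ 2 * lam) * v (n + 1) ω = v n ω - τ * lam * u n ω + ΔL n ω)
    (E : ℕ → ℝ)
    (hE : ∀ n, E n = (1 / 2) * ∫ ω, ((v n ω) ^ 2 + lam * (u n ω) ^ 2)) :
    ∀ n, E (n + 1) = (1 + τ ^ 2 * lam)⁻¹ * (E n + (1 / 2) * vl * τ) := by
  intro n
  have ha : 1 + τ ^ 2 * lam ≠ 0 := by positivity
  have hvL : IndepFun (v n) (ΔL n) ℙ := (hindep n).comp measurable_snd measurable_id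
  have hnext : (1 + τ ^ 2 * lam) * ∫ ω, (v (n + 1) ω ^ 2 + lam * u (n + 1) ω ^ 2)
      = (∫ ω, (v n ω ^ 2 + lam * u n ω ^ 2)) + τ * vl := by
    rw [← integral_const_mul]
    simp_rw [backwardEuler_energy_identity (hrecv n _) (hrecu n _)]
    have hsq : Integrable (fun ω => (v n ω + ΔL n ω) ^ 2) ℙ :=
      ((hv n).add (hL n)).integrable_sq
    rw [integral_add hsq ((hu n).integrable_sq.const_mul lam),
      hvL.integral_add_sq (hv n) (hL n) (hLmean n), hLvar n,
      integral_add (hv n).integrable_sq ((hu n).integrable_sq.const_mul lam)]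
    ring
  rw [hE, hE, eq_inv_mul_iff_mul_eq₀ ha]
  linear_combination (1 / 2 : ℝ) * hnext

theorem backward_EM_energy_recursion
    {Ω : Type*} [MeasureSpace Ω] [IsProbabilityMeasure (ℙ : Measure Ω)]
    (lam τ vl : ℝ) (hlam : 0 < lam) (hτ : 0 < τ) (hvl : 0 ≤ vl)
    (u v ΔL : ℕ → Ω → ℝ)
    (hu : ∀ n, MemLp (u n) 2 ℙ) (hv : ∀ n, MemLp (v n) 2 ℙ)
    (hL : ∀ n, MemLp (ΔL n) 2 ℙ)
    (hLmean : ∀ n, ∫ ω, ΔL n ω = 0)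
    (hLvar : ∀ n, ∫ ω, (ΔL n ω) ^ 2 = τ * vl)
    (hindep : ∀ n, IndepFun (fun ω => (u n ω, v n ω)) (ΔL n) ℙ)
    (hrecu : ∀ n ω, u (n + 1) ω = u n ω + τ * v (n + 1) ω)
    (hrecv : ∀ n ω, (1 + τ ^ 2 * lam) * v (n + 1) ω = v n ω - τ * lam * u n ω + ΔL n ω)
    (E : ℕ → ℝ)
    (hE : ∀ n, E n = (1 / 2) * ∫ ω, ((v n ω) ^ 2 + lam * (u n ω) ^ 2)) :
    ∀ n, E (n + 1) = (1 + τ ^ 2 * lam)⁻¹ * (E n + (1 / 2) * vl * τ) :=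
  backward_EM_energy_recursion_general lam τ vl hlam u v ΔL hu hv hL hLmean hLvar hindep hrecu hrecv
    E hE
end

section
/- For the exact stochastic rotation recursion (stochastic trigonometric/exponential method for one oscillator mode): given ω = √λ with λ > 0, let u_{n+1} = cos(τω)u_n + ω^{-1} sin(τω) v_n + ω^{-1} sin(τω) ξ_n, v_{n+1} = -ω sin(τω) u_n + cos(τω) v_n + cos(τω) ξ_n, where ξ_n has mean zero and variance σ² and is independent of (u_n, v_n); then the expected energy E_n = (1/2)E[v_n² + ω² u_n²] satisfies E_{n+1} = E_n + σ²/2. -/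
open MeasureTheory ProbabilityTheory

theorem trigonometric_method_energy_step
    {Ω : Type*} [MeasureSpace Ω] [IsProbabilityMeasure (ℙ : Measure Ω)]
    (w τ σ : ℝ) (hw : 0 < w) (hτ : 0 < τ) (hσ : 0 ≤ σ)
    (u v ξ : ℕ → Ω → ℝ)
    (hu : ∀ n, MemLp (u n) 2 ℙ) (hv : ∀ n, MemLp (v n) 2 ℙ)
    (hξ : ∀ n, MemLp (ξ n) 2 ℙ)
    (hξmean : ∀ n, ∫ ω, ξ n ω = 0)
    (hξvar : ∀ n, ∫ ω, (ξ n ω) ^ 2 = σ ^ 2)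
    (hindep : ∀ n, IndepFun (fun ω => (u n ω, v n ω)) (ξ n) ℙ)
    (hrecu : ∀ n ω, u (n + 1) ω =
      Real.cos (τ * w) * u n ω + w⁻¹ * Real.sin (τ * w) * v n ω
        + w⁻¹ * Real.sin (τ * w) * ξ n ω)
    (hrecv : ∀ n ω, v (n + 1) ω =
      -(w * Real.sin (τ * w)) * u n ω + Real.cos (τ * w) * v n ω
        + Real.cos (τ * w) * ξ n ω)
    (E : ℕ → ℝ)
    (hE : ∀ n, E n = (1 / 2) * ∫ ω, ((v n ω) ^ 2 + w ^ 2 * (u n ω) ^ 2)) :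
    ∀ n, E (n + 1) = E n + σ ^ 2 / 2 := by
  intro n
  have hw' : w ≠ 0 := ne_of_gt hw
  have key : ∀ ω, (v (n+1) ω) ^ 2 + w ^ 2 * (u (n+1) ω) ^ 2 =
      ((v n ω) ^ 2 + w ^ 2 * (u n ω) ^ 2) + (2 * (v n ω * ξ n ω) + (ξ n ω) ^ 2) := by
    intro ω
    rw [hrecu, hrecv]
    have h := Real.sin_sq_add_cos_sq (w * τ)
    field_simp
    linear_combination (w ^ 2 * (u n ω) ^ 2 + (v n ω) ^ 2 + (ξ n ω) ^ 2
      + 2 * v n ω * ξ n ω) * h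
  -- integrability
  have hvsq : Integrable (fun ω => (v n ω) ^ 2) := (hv n).integrable_sq
  have husq : Integrable (fun ω => (u n ω) ^ 2) := (hu n).integrable_sq
  have hξsq : Integrable (fun ω => (ξ n ω) ^ 2) := (hξ n).integrable_sq
  have hvξ : Integrable (fun ω => v n ω * ξ n ω) := by
    have : MemLp ((v n) • (ξ n)) 1 ℙ :=
      (hξ n).smul (hv n)
    exact this.integrable le_rfl
  have hsum : Integrable (fun ω => (v n ω) ^ 2 + w ^ 2 * (u n ω) ^ 2) :=
    hvsq.add (husq.const_mul _)
  -- independence of v n and ξ n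
  have hvind : IndepFun (v n) (ξ n) ℙ := by
    have := (hindep n).comp (φ := fun p : ℝ × ℝ => p.2) (ψ := id)
      measurable_snd measurable_id
    exact this
  have hcross : ∫ ω, v n ω * ξ n ω = 0 := by
    have h2 := hvind.integral_mul_eq_mul_integral (hv n).aestronglyMeasurable (hξ n).aestronglyMeasurable
    have h3 : ∫ ω, v n ω * ξ n ω = ∫ ω, (v n * ξ n) ω := rfl
    rw [h3]
    simp only [Pi.mul_apply]
    rw [show (∫ ω, v n ω * ξ n ω) = ∫ ω, (v n * ξ n) ω from rfl] at *
    rw [h2, hξmean, mul_zero]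
  have hEint : ∫ ω, ((v (n+1) ω) ^ 2 + w ^ 2 * (u (n+1) ω) ^ 2) =
      (∫ ω, ((v n ω) ^ 2 + w ^ 2 * (u n ω) ^ 2)) + σ ^ 2 := by
    have : (fun ω => (v (n+1) ω) ^ 2 + w ^ 2 * (u (n+1) ω) ^ 2) =
        fun ω => ((v n ω) ^ 2 + w ^ 2 * (u n ω) ^ 2) + (2 * (v n ω * ξ n ω) + (ξ n ω) ^ 2) := by
      funext ω; exact key ω
    have h' : Integrable (fun ω => 2 * (v n ω * ξ n ω) + (ξ n ω) ^ 2) ℙ :=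
      (hvξ.const_mul 2).add hξsq
    rw [this, integral_add hsum h']
    rw [integral_add (hvξ.const_mul 2) hξsq, integral_const_mul, hcross, hξvar]
    ring
  rw [hE, hE, hEint]
  ring
end

section
/- For the complex backward Euler–Maruyama scheme for one Schrödinger mode: u_{n+1} = (1 - iτλ)^{-1}(u_n - i ΔL_n), with λ ∈ ℝ, τ > 0, ΔL_n mean-zero with E[|ΔL_n|²] = τ v and independent of u_n, the expected mass satisfies M_{n+1} = (1 + τ²λ²)^{-1}(M_n + τ v); consequently for |λ| ≥ 1, M_n ≤ M_0 + v/τ for all n. -/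
/-!
Since `u n` and `i ΔL n` are independent and the noise has mean zero, the cross term of
`‖u n - i ΔL n‖²` integrates to zero, so the expected mass of `u n - i ΔL n` is `M n + τ v`;
the factor `(1 - iτλ)⁻¹` multiplies it by `(1 + τ²λ²)⁻¹`. For `λ² ≥ 1` the level `M 0 + v / τ`
is preserved by this affine recursion, since its fixed point `v / (τ λ²)` lies below it.
-/

open MeasureTheory ProbabilityTheory

section Independence

variable {Ω E : Type*} {mΩ : MeasurableSpace Ω} {μ : Measure Ω}
  [NormedAddCommGroup E] [InnerProductSpace ℝ E] [CompleteSpace E]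
  [MeasurableSpace E] [BorelSpace E] {X Y : Ω → E}

theorem ProbabilityTheory.IndepFun.integral_inner_eq_zero (hXY : IndepFun X Y μ)
    (hX : Integrable X μ) (hY : Integrable Y μ) (hY0 : μ[Y] = 0) :
    ∫ ω, inner ℝ (X ω) (Y ω) ∂μ = 0 :=
  (hXY.integral_bilin hX hY (innerSL ℝ)).trans (by simp [hY0])

theorem ProbabilityTheory.IndepFun.integral_norm_sub_sq [IsFiniteMeasure μ]
    (hXY : IndepFun X Y μ) (hX : MemLp X 2 μ) (hY : MemLp Y 2 μ) (hY0 : μ[Y] = 0) :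
    ∫ ω, ‖X ω - Y ω‖ ^ 2 ∂μ = ∫ ω, ‖X ω‖ ^ 2 ∂μ + ∫ ω, ‖Y ω‖ ^ 2 ∂μ := by
  have hX1 := hX.integrable one_le_two
  have hY1 := hY.integrable one_le_two
  have hinner : Integrable (fun ω ↦ inner ℝ (X ω) (Y ω)) μ :=
    hXY.integrable_bilin hX1 hY1 (innerSL ℝ)
  have hXsq := hX.integrable_norm_pow two_ne_zero
  have hcross := hinner.const_mul 2
  simp_rw [norm_sub_sq_real]
  rw [integral_add (f := fun ω ↦ ‖X ω‖ ^ 2 - 2 * inner ℝ (X ω) (Y ω)) (hXsq.sub hcross)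
      (hY.integrable_norm_pow two_ne_zero),
    integral_sub hXsq hcross, integral_const_mul, hXY.integral_inner_eq_zero hX1 hY1 hY0,
    mul_zero, sub_zero]

end Independence

theorem Complex.sq_norm_inv_one_sub_I_mul (t : ℝ) : ‖(1 - I * t)⁻¹‖ ^ 2 = (1 + t ^ 2)⁻¹ := by
  have hcart : 1 - I * t = (1 : ℝ) + (-t : ℝ) * I := by push_cast; ring
  rw [norm_inv, inv_pow, Complex.sq_norm, hcart, normSq_add_mul_I]
  ring

theorem le_of_succ_le_mul_add {M : ℕ → ℝ} {q b B : ℝ} (hq : 0 ≤ q)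
    (hM : ∀ n, M (n + 1) ≤ q * (M n + b)) (h0 : M 0 ≤ B) (hB : q * (B + b) ≤ B) (n : ℕ) :
    M n ≤ B := by
  induction n with
  | zero => exact h0
  | succ n ih =>
    calc M (n + 1) ≤ q * (M n + b) := hM n
      _ ≤ q * (B + b) := by gcongr
      _ ≤ B := hB

theorem backward_EM_schrodinger_mass
    {Ω : Type*} [MeasureSpace Ω] [IsProbabilityMeasure (ℙ : Measure Ω)]
    (lam τ v : ℝ) (hτ : 0 < τ) (hv : 0 ≤ v)
    (u ΔL : ℕ → Ω → ℂ)
    (hu : ∀ n, MemLp (u n) 2 ℙ) (hL : ∀ n, MemLp (ΔL n) 2 ℙ)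
    (hLmean : ∀ n, ∫ ω, ΔL n ω = 0)
    (hLvar : ∀ n, ∫ ω, ‖ΔL n ω‖ ^ 2 = τ * v)
    (hindep : ∀ n, IndepFun (u n) (ΔL n) ℙ)
    (hrec : ∀ n ω, u (n + 1) ω = (1 - Complex.I * τ * lam)⁻¹ * (u n ω - Complex.I * ΔL n ω))
    (M : ℕ → ℝ)
    (hM : ∀ n, M n = ∫ ω, ‖u n ω‖ ^ 2) :
    (∀ n, M (n + 1) = (1 + τ ^ 2 * lam ^ 2)⁻¹ * (M n + τ * v)) ∧
      (1 ≤ |lam| → ∀ n, M n ≤ M 0 + v / τ) := by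
  have hgain : ‖(1 - Complex.I * τ * lam)⁻¹‖ ^ 2 = (1 + τ ^ 2 * lam ^ 2)⁻¹ := by
    rw [mul_assoc, ← Complex.ofReal_mul, Complex.sq_norm_inv_one_sub_I_mul, mul_pow]
  have hstep (n : ℕ) : M (n + 1) = (1 + τ ^ 2 * lam ^ 2)⁻¹ * (M n + τ * v) := by
    have hnoise : IndepFun (u n) (fun ω ↦ Complex.I * ΔL n ω) ℙ :=
      (hindep n).comp measurable_id (measurable_const_mul Complex.I)
    have hmean : ∫ ω, Complex.I * ΔL n ω = 0 := by rw [integral_const_mul, hLmean n, mul_zero]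
    simp_rw [hM, hrec, norm_mul, mul_pow, hgain, integral_const_mul,
      hnoise.integral_norm_sub_sq (hu n) ((hL n).const_mul Complex.I) hmean, norm_mul,
      Complex.norm_I, one_mul, hLvar]
  refine ⟨hstep, fun hlam ↦ le_of_succ_le_mul_add (by positivity) (fun n ↦ (hstep n).le)
    (le_add_of_nonneg_right (by positivity)) ?_⟩
  have hM0 : 0 ≤ M 0 := hM 0 ▸ integral_nonneg fun ω ↦ by positivity
  have hlam2 : 1 ≤ lam ^ 2 := (one_le_sq_iff_one_le_abs lam).2 hlam
  rw [inv_mul_le_iff₀ (by positivity)]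
  calc M 0 + v / τ + τ * v
      ≤ M 0 + v / τ + τ * v * lam ^ 2 + τ ^ 2 * lam ^ 2 * M 0 := by
        have hvlam := mul_le_mul_of_nonneg_left hlam2 (mul_nonneg hτ.le hv)
        linarith [mul_nonneg (mul_nonneg (sq_nonneg τ) (sq_nonneg lam)) hM0]
    _ = (1 + τ ^ 2 * lam ^ 2) * (M 0 + v / τ) := by
        field_simp
        ring
end
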